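/- For positive integers n, k, t, r with 1 ≤ r ≤ k, the number of k-tuples (α¹, …, αᵏ) of strict partitions with total weight n, where α¹, …, αʳ each have exactly t parts and α^{r+1}, …, αᵏ each have exactly t−1 parts, equals the number of strictly decreasing sequences of positive integers λ₁ > λ₂ > ⋯ > λ_{(t−1)k+r} with λ₁ + λ_{k+1} + λ_{2k+1} + ⋯ + λ_{(t−1)k+1} = n. -/

import Mathlib

/-- `l` is a partition: a weakly decreasing list of positive integers. -/
def IsPartition (l : List ℕ) : Prop :=
  l.Pairwise (· ≥ ·) ∧ ∀ x ∈ l, 0 < x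

/-- `l` is a strict partition: a strictly decreasing list of positive integers. -/
def IsStrict (l : List ℕ) : Prop :=
  l.Pairwise (· > ·) ∧ ∀ x ∈ l, 0 < x

/-- Sum of the parts of `l` in positions `1, k+1, 2k+1, …` (0-indexed `0, k, 2k, …`). -/
def schmidtSum (k : ℕ) (l : List ℕ) : ℕ :=
  ∑ i ∈ Finset.range l.length, if i % k = 0 then l.getD i 0 else 0

/-!
A strict partition `λ₀ > λ₁ > ⋯ > λ_{m-1}` is determined by its positive gaps
`f j = λ j - λ (j+1)` (with `λ m = 0`), since `λ i = ∑_{j ≥ i} f j`. In these coordinates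
`∑ λ i = ∑ (j + 1) f j`, and the sum of the parts at positions `0, k, 2k, …` is
`∑ (j / k + 1) f j`. Sorting the positions `j < (t - 1) k + r` by their residue mod `k` gives
`k` rows, of length `t` for the first `r` residues and `t - 1` for the others, and turns `j / k`
into the position of `j` in its row. So both sides count the same positive vectors with the same
weights.
-/

open Finset

section TailSum

variable {m : ℕ}

def tailSum (f : Fin m → ℕ) (i : Fin m) : ℕ := ∑ j ∈ Ici i, f j

def nextEntry (v : Fin m → ℕ) (i : Fin m) : ℕ := if h : i.val + 1 < m then v ⟨i.val + 1, h⟩ else 0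

def drops (v : Fin m → ℕ) (i : Fin m) : ℕ := v i - nextEntry v i

lemma sum_Ioi_eq_nextEntry_tailSum (f : Fin m → ℕ) (i : Fin m) :
    ∑ j ∈ Ioi i, f j = nextEntry (tailSum f) i := by
  unfold nextEntry tailSum
  split_ifs with h
  · congr 1
    ext j
    simp only [mem_Ioi, mem_Ici, Fin.lt_def, Fin.le_def]
    omega
  · refine sum_eq_zero fun j hj => absurd (mem_Ioi.1 hj) ?_
    simp only [Fin.lt_def]
    omega

lemma tailSum_eq_add_nextEntry (f : Fin m → ℕ) (i : Fin m) :
    tailSum f i = f i + nextEntry (tailSum f) i := by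
  rw [← sum_Ioi_eq_nextEntry_tailSum, tailSum, add_sum_Ioi_eq_sum_Ici]

lemma eq_tailSum_of_eq_add_nextEntry {v f : Fin m → ℕ} (h : ∀ i, v i = f i + nextEntry v i) :
    v = tailSum f := by
  funext i
  induction i using WellFoundedGT.induction with
  | _ i ih =>
    rw [h i, tailSum_eq_add_nextEntry f i]
    unfold nextEntry
    split_ifs
    · rw [ih _ (Fin.lt_def.2 (Nat.lt_succ_self _))]
    · rfl

lemma drops_tailSum (f : Fin m → ℕ) : drops (tailSum f) = f := by
  funext i
  rw [drops, tailSum_eq_add_nextEntry f i, Nat.add_sub_cancel]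

lemma tailSum_drops {v : Fin m → ℕ} (hv : ∀ i, nextEntry v i ≤ v i) : tailSum (drops v) = v :=
  (eq_tailSum_of_eq_add_nextEntry fun i => (Nat.sub_add_cancel (hv i)).symm).symm

lemma tailSum_pos {f : Fin m → ℕ} (hf : ∀ i, 0 < f i) (i : Fin m) : 0 < tailSum f i :=
  (hf i).trans_le (single_le_sum (fun _ _ => Nat.zero_le _) (mem_Ici.2 le_rfl))

lemma strictAnti_tailSum {f : Fin m → ℕ} (hf : ∀ i, 0 < f i) : StrictAnti (tailSum f) :=
  fun i j hij => sum_lt_sum_of_subset (Ici_subset_Ici.2 hij.le) (mem_Ici.2 le_rfl)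
    (by simpa using hij) (hf i) fun _ _ _ => Nat.zero_le _

lemma nextEntry_lt {v : Fin m → ℕ} (hv : StrictAnti v) (hpos : ∀ i, 0 < v i) (i : Fin m) :
    nextEntry v i < v i := by
  unfold nextEntry
  split_ifs
  · exact hv (Fin.lt_def.2 (Nat.lt_succ_self _))
  · exact hpos i

def tailSumEquiv :
    {f : Fin m → ℕ // ∀ i, 0 < f i} ≃ {v : Fin m → ℕ // StrictAnti v ∧ ∀ i, 0 < v i} where
  toFun f := ⟨tailSum f, strictAnti_tailSum f.2, tailSum_pos f.2⟩
  invFun v := ⟨drops v, fun i => Nat.sub_pos_of_lt (nextEntry_lt v.2.1 v.2.2 i)⟩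
  left_inv f := Subtype.ext (drops_tailSum f.1)
  right_inv v := Subtype.ext (tailSum_drops fun i => (nextEntry_lt v.2.1 v.2.2 i).le)

lemma sum_mul_tailSum (w f : Fin m → ℕ) :
    ∑ i, w i * tailSum f i = ∑ j, (∑ i ∈ Iic j, w i) * f j := by
  simp_rw [tailSum, mul_sum, sum_mul]
  exact sum_comm' fun i j => by simp

end TailSum

section StrictList

variable {m : ℕ}

lemma isStrict_ofFn {v : Fin m → ℕ} : IsStrict (List.ofFn v) ↔ StrictAnti v ∧ ∀ i, 0 < v i := by
  simp [IsStrict, List.pairwise_ofFn, StrictAnti]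

def strictAntiEquivStrict :
    {v : Fin m → ℕ // StrictAnti v ∧ ∀ i, 0 < v i} ≃ {l : List ℕ // IsStrict l ∧ l.length = m} :=
  ((Equiv.vectorEquivFin ℕ m).symm.subtypeEquiv fun v => by
      rw [← isStrict_ofFn, ← List.Vector.toList_ofFn]; rfl).trans
    ((Equiv.subtypeSubtypeEquivSubtypeInter _ IsStrict).trans
      (Equiv.subtypeEquivRight fun _ => and_comm))

def posVecEquivStrict :
    {f : Fin m → ℕ // ∀ i, 0 < f i} ≃ {l : List ℕ // IsStrict l ∧ l.length = m} :=
  tailSumEquiv.trans strictAntiEquivStrict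

lemma posVecEquivStrict_apply (f : {f : Fin m → ℕ // ∀ i, 0 < f i}) :
    (posVecEquivStrict f).1 = List.ofFn (tailSum f.1) :=
  List.Vector.toList_ofFn _

lemma schmidtSum_ofFn (k : ℕ) (v : Fin m → ℕ) :
    schmidtSum k (List.ofFn v) = ∑ i : Fin m, (if i.val % k = 0 then 1 else 0) * v i := by
  rw [schmidtSum, List.length_ofFn, ← Fin.sum_univ_eq_sum_range]
  refine sum_congr rfl fun i _ => ?_
  split_ifs <;> simp

lemma card_filter_mod_eq_zero_range (k j : ℕ) : #{i ∈ range (j + 1) | i % k = 0} = j / k + 1 := by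
  induction j with
  | zero => simp [filter_singleton]
  | succ j ih =>
    rw [range_add_one, filter_insert, Nat.succ_div]
    by_cases h : (j + 1) % k = 0
    · rw [if_pos h, if_pos (Nat.dvd_of_mod_eq_zero h), card_insert_of_notMem (by simp), ih]
    · rw [if_neg h, if_neg (mt Nat.mod_eq_zero_of_dvd h), ih, add_zero]

lemma sum_Iic_ite_mod (k : ℕ) (j : Fin m) :
    ∑ i ∈ Iic j, (if i.val % k = 0 then 1 else 0) = j.val / k + 1 := by
  rw [← card_filter_mod_eq_zero_range, Nat.range_succ_eq_Iic, ← Fin.map_valEmbedding_Iic,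
    filter_map, card_map, card_filter]
  rfl

lemma schmidtSum_posVecEquivStrict (k : ℕ) (f : {f : Fin m → ℕ // ∀ i, 0 < f i}) :
    schmidtSum k (posVecEquivStrict f).1 = ∑ j, (j.val / k + 1) * f.1 j := by
  simp only [posVecEquivStrict_apply, schmidtSum_ofFn, sum_mul_tailSum, sum_Iic_ite_mod]

lemma sum_posVecEquivStrict (f : {f : Fin m → ℕ // ∀ i, 0 < f i}) :
    (posVecEquivStrict f).1.sum = ∑ j, (j.val + 1) * f.1 j := by
  rw [posVecEquivStrict_apply, List.sum_ofFn]
  simpa only [one_mul, mul_one, sum_const, Fin.card_Iic, smul_eq_mul] using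
    sum_mul_tailSum (fun _ => 1) f.1

end StrictList

lemma Nat.card_subtype_and_congr {α β : Type*} {p q : α → Prop} {p' q' : β → Prop}
    (e : {a // p a} ≃ {b // p' b}) (h : ∀ a, q a.1 ↔ q' (e a).1) :
    Nat.card {a // p a ∧ q a} = Nat.card {b // p' b ∧ q' b} :=
  Nat.card_congr <| (Equiv.subtypeSubtypeEquivSubtypeInter p q).symm.trans
    ((e.subtypeEquiv h).trans (Equiv.subtypeSubtypeEquivSubtypeInter p' q'))

def piPosVecEquivStrict {ι : Type*} (ℓ : ι → ℕ) :
    {g : ∀ i, Fin (ℓ i) → ℕ // ∀ i j, 0 < g i j} ≃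
      {α : ι → List ℕ // ∀ i, IsStrict (α i) ∧ (α i).length = ℓ i} :=
  Equiv.subtypePiEquivPi.trans
    ((Equiv.piCongrRight fun _ => posVecEquivStrict).trans Equiv.subtypePiEquivPi.symm)

section WeightedComps

variable {ι κ : Type*} [Fintype ι] [Fintype κ]

def weightedComps (w : ι → ℕ) (n : ℕ) : Set (ι → ℕ) :=
  {f | (∀ i, 0 < f i) ∧ ∑ i, w i * f i = n}

lemma card_weightedComps_congr (e : ι ≃ κ) {w : ι → ℕ} {w' : κ → ℕ} (h : ∀ i, w' (e i) = w i)
    (n : ℕ) : Nat.card (weightedComps w n) = Nat.card (weightedComps w' n) :=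
  Nat.card_congr <| Equiv.subtypeEquiv (e.arrowCongr (Equiv.refl ℕ)) fun f =>
    (e.symm.forall_congr_right (q := fun i => 0 < f i)).symm.and <| by
      rw [← e.sum_comp]
      simp [h]

lemma card_weightedComps_sigma (ℓ : ι → ℕ) (n : ℕ) :
    Nat.card (weightedComps (fun p : Σ i, Fin (ℓ i) => p.2.val + 1) n) =
      Nat.card {α : ι → List ℕ // (∀ i, IsStrict (α i) ∧ (α i).length = ℓ i) ∧
        ∑ i, (α i).sum = n} :=
  calc _ = Nat.card {g : ∀ i, Fin (ℓ i) → ℕ // (∀ i j, 0 < g i j) ∧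
          ∑ i, ∑ j, (j.val + 1) * g i j = n} :=
        Nat.card_congr <| Equiv.subtypeEquiv (Equiv.piCurry _) fun f => by
          simp [weightedComps, Fintype.sum_sigma, Sigma.forall, Sigma.curry]
    _ = _ := Nat.card_subtype_and_congr (piPosVecEquivStrict ℓ) fun g => Iff.of_eq <|
          congrArg (· = n) (sum_congr rfl fun i _ => (sum_posVecEquivStrict ⟨g.1 i, g.2 i⟩).symm)

end WeightedComps

lemma card_weightedComps_div_add_one (k m n : ℕ) :
    Nat.card (weightedComps (fun j : Fin m => j.val / k + 1) n) =
      Nat.card {l : List ℕ // IsStrict l ∧ l.length = m ∧ schmidtSum k l = n} :=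
  (Nat.card_subtype_and_congr posVecEquivStrict fun f => by
      rw [schmidtSum_posVecEquivStrict]).trans
    (Nat.card_congr (Equiv.subtypeEquivRight fun _ => and_assoc))

def finEquivSigmaDivMod {k m : ℕ} (hk : 0 < k) {ℓ : Fin k → ℕ}
    (hℓ : ∀ i j, j < ℓ i ↔ j * k + i < m) : Fin m ≃ Σ i : Fin k, Fin (ℓ i) where
  toFun x := ⟨⟨x % k, Nat.mod_lt _ hk⟩, ⟨x / k, (hℓ _ _).2 (by simp [Nat.div_add_mod'])⟩⟩
  invFun p := ⟨p.2 * k + p.1, (hℓ _ _).1 p.2.2⟩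
  left_inv x := Fin.ext (Nat.div_add_mod' x k)
  right_inv := fun ⟨i, j⟩ => by
    have hmod : (j * k + i) % k = i := by simp [Nat.mod_eq_of_lt i.2]
    have hdiv : (j * k + i) / k = j := by
      rw [add_comm, Nat.add_mul_div_right _ _ hk, Nat.div_eq_of_lt i.2, zero_add]
    exact Sigma.ext (Fin.ext hmod) ((Fin.heq_ext_iff (congrArg ℓ (Fin.ext hmod))).2 hdiv)

def rowLength {k : ℕ} (t r : ℕ) (i : Fin k) : ℕ := if i.val < r then t else t - 1

lemma lt_rowLength_iff {k t r : ℕ} (ht : 1 ≤ t) (hrk : r ≤ k) (i : Fin k) (j : ℕ) :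
    j < rowLength t r i ↔ j * k + i < (t - 1) * k + r := by
  obtain ⟨s, rfl⟩ : ∃ s, t = s + 1 := ⟨t - 1, by omega⟩
  have hi := i.2
  simp only [rowLength, Nat.add_sub_cancel]
  split_ifs with h
  · constructor
    · intro hj
      have := Nat.mul_le_mul_right k (Nat.lt_succ_iff.1 hj)
      omega
    · intro hj
      by_contra hc
      have := Nat.mul_le_mul_right k (not_lt.1 hc)
      rw [add_mul, one_mul] at this
      omega
  · constructor
    · intro hj
      have := Nat.mul_le_mul_right k (Nat.succ_le_of_lt hj)
      rw [Nat.succ_mul] at this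
      omega
    · intro hj
      by_contra hc
      have := Nat.mul_le_mul_right k (not_lt.1 hc)
      omega

lemma forall_eq_rowLength_iff {k t r : ℕ} (a : Fin k → ℕ) :
    (∀ i, a i = rowLength t r i) ↔
      (∀ i : Fin k, i.val < r → a i = t) ∧ (∀ i : Fin k, r ≤ i.val → a i = t - 1) := by
  simp only [rowLength, ← forall_and]
  refine forall_congr' fun i => ?_
  split_ifs with h
  · simp [h, not_le.2 h]
  · simp [h, not_lt.1 h]

theorem schmidt_k_partition_general (n k t r : ℕ) (hk : 1 ≤ k) (ht : 1 ≤ t)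
    (hrk : r ≤ k) :
    Nat.card {α : Fin k → List ℕ //
        (∀ i, IsStrict (α i)) ∧
        (∀ i : Fin k, i.val < r → (α i).length = t) ∧
        (∀ i : Fin k, r ≤ i.val → (α i).length = t - 1) ∧
        ∑ i, (α i).sum = n} =
      Nat.card {l : List ℕ //
        IsStrict l ∧ l.length = (t - 1) * k + r ∧ schmidtSum k l = n} := by
  calc _ = Nat.card {α : Fin k → List ℕ // (∀ i, IsStrict (α i) ∧
          (α i).length = rowLength t r i) ∧ ∑ i, (α i).sum = n} :=
        Nat.card_congr <| Equiv.subtypeEquivRight fun α => by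
          rw [forall_and, forall_eq_rowLength_iff fun i => (α i).length, and_assoc, and_assoc]
    _ = Nat.card (weightedComps (fun p : Σ i, Fin (rowLength t r i) => p.2.val + 1) n) :=
        (card_weightedComps_sigma _ n).symm
    _ = Nat.card (weightedComps (fun x : Fin ((t - 1) * k + r) => x.val / k + 1) n) :=
        (card_weightedComps_congr (finEquivSigmaDivMod hk (lt_rowLength_iff ht hrk))
          (fun _ => rfl) n).symm
    _ = _ := card_weightedComps_div_add_one k _ n

/-- Schmidt `k`-partition theorem: `k`-tuples of strict partitions of total weight `n`
with the first `r` of length `t` and the remaining of length `t-1` are equinumerous with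
Schmidt `k`-partitions of `n` with `(t-1)k + r` parts. -/
theorem schmidt_k_partition (n k t r : ℕ) (hn : 1 ≤ n) (hk : 1 ≤ k) (ht : 1 ≤ t)
    (hr1 : 1 ≤ r) (hrk : r ≤ k) :
    Nat.card {α : Fin k → List ℕ //
        (∀ i, IsStrict (α i)) ∧
        (∀ i : Fin k, i.val < r → (α i).length = t) ∧
        (∀ i : Fin k, r ≤ i.val → (α i).length = t - 1) ∧
        ∑ i, (α i).sum = n} =
      Nat.card {l : List ℕ //
        IsStrict l ∧ l.length = (t - 1) * k + r ∧ schmidtSum k l = n} :=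
  schmidt_k_partition_general n k t r hk ht hrk
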